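/- In a vector lattice X, a net x_α converges in order to 0 if and only if x_α is unbounded order convergent to 0 and eventually order bounded. -/

import Mathlib

set_option linter.unusedSectionVars false
set_option maxHeartbeats 1000000

open Filter Set

section ODual

variable (E : Type*) [AddCommGroup E] [Preorder E] [Module ℝ E]

/-- The order (bounded) dual: linear functionals bounded on order intervals. -/
noncomputable def obDual : Submodule ℝ (E →ₗ[ℝ] ℝ) where
  carrier := {f | ∀ w : E, ∃ M : ℝ, ∀ x : E, -w ≤ x → x ≤ w → |f x| ≤ M}
  zero_mem' := fun w => ⟨0, fun x _ _ => by simp⟩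
  add_mem' := fun {f g} hf hg w => by
    obtain ⟨M, hM⟩ := hf w
    obtain ⟨N, hN⟩ := hg w
    refine ⟨M + N, fun x h1 h2 => ?_⟩
    calc |(f + g) x| = |f x + g x| := by simp
    _ ≤ |f x| + |g x| := abs_add_le _ _
    _ ≤ M + N := add_le_add (hM x h1 h2) (hN x h1 h2)
  smul_mem' := fun c f hf => by
    intro w
    obtain ⟨M, hM⟩ := hf w
    refine ⟨|c| * M, fun x h1 h2 => ?_⟩
    calc |(c • f) x| = |c| * |f x| := by simp [abs_mul]
    _ ≤ |c| * M := mul_le_mul_of_nonneg_left (hM x h1 h2) (abs_nonneg c)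

/-- The pointwise-on-positive-elements (pre)order on a space of functionals. -/
instance instSubPre (Y : Submodule ℝ (E →ₗ[ℝ] ℝ)) : Preorder Y where
  le f g := ∀ x : E, 0 ≤ x → (f : E →ₗ[ℝ] ℝ) x ≤ (g : E →ₗ[ℝ] ℝ) x
  le_refl f x _ := le_rfl
  le_trans f g h h1 h2 x hx := (h1 x hx).trans (h2 x hx)

variable {E}

theorem subPre_le_iff {Y : Submodule ℝ (E →ₗ[ℝ] ℝ)} {f g : Y} :
    f ≤ g ↔ ∀ x : E, 0 ≤ x → (f : E →ₗ[ℝ] ℝ) x ≤ (g : E →ₗ[ℝ] ℝ) x := Iff.rfl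

/-- Order convergence of a net to a limit (sandwich form: eventually
`l - d ≤ x_α ≤ l + d` for every `d` in a set directed downward to `0`). -/
def OConvTo {ι : Type*} [Preorder ι] (x : ι → E) (l : E) : Prop :=
  ∃ D : Set E, D.Nonempty ∧ DirectedOn (· ≥ ·) D ∧ IsGLB D 0 ∧
    ∀ d ∈ D, ∃ α₀ : ι, ∀ α, α₀ ≤ α → l - d ≤ x α ∧ x α ≤ l + d

/-- Order continuity of a linear functional: `f(x_α) → 0` whenever `x_α ↓ 0`. -/
def OrdContE (f : E →ₗ[ℝ] ℝ) : Prop :=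
  ∀ D : Set E, D.Nonempty → DirectedOn (· ≥ ·) D → IsGLB D 0 →
    ∀ ε : ℝ, 0 < ε → ∃ d ∈ D, ∀ e ∈ D, e ≤ d → |f e| < ε

end ODual

section VL

variable (X : Type*) [Lattice X] [AddCommGroup X]
  [CovariantClass X X (· + ·) (· ≤ ·)] [Module ℝ X] [PosSMulMono ℝ X]

variable {X} in
/-- Unbounded order convergence: `|x_α - l| ⊓ u →o 0` for every `u ≥ 0`. -/
def uoConvTo {ι : Type*} [Preorder ι] (x : ι → X) (l : X) : Prop :=
  ∀ u : X, 0 ≤ u → OConvTo (fun α => |x α - l| ⊓ u) (0 : X)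

/-- The canonical evaluation of `x ∈ X` on a space `Y` of functionals on `X`. -/
def hatFun (Y : Submodule ℝ (X →ₗ[ℝ] ℝ)) (x : X) : Y →ₗ[ℝ] ℝ where
  toFun f := (f : X →ₗ[ℝ] ℝ) x
  map_add' f g := by simp
  map_smul' c f := by simp

theorem hatFun_mem (Y : Submodule ℝ (X →ₗ[ℝ] ℝ)) (x : X) :
    hatFun X Y x ∈ obDual Y := by
  intro w
  refine ⟨(w : X →ₗ[ℝ] ℝ) (x⁺) + (w : X →ₗ[ℝ] ℝ) (x⁻), fun f h1 h2 => ?_⟩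
  have hp : (0 : X) ≤ x⁺ := posPart_nonneg x
  have hn : (0 : X) ≤ x⁻ := negPart_nonneg x
  have e1 := (subPre_le_iff.mp h1) _ hp
  have e2 := (subPre_le_iff.mp h2) _ hp
  have e3 := (subPre_le_iff.mp h1) _ hn
  have e4 := (subPre_le_iff.mp h2) _ hn
  have c1 : -((w : X →ₗ[ℝ] ℝ) (x⁺)) ≤ (f : X →ₗ[ℝ] ℝ) (x⁺) := by simpa using e1
  have c3 : -((w : X →ₗ[ℝ] ℝ) (x⁻)) ≤ (f : X →ₗ[ℝ] ℝ) (x⁻) := by simpa using e3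
  have key : (f : X →ₗ[ℝ] ℝ) x
      = (f : X →ₗ[ℝ] ℝ) (x⁺) - (f : X →ₗ[ℝ] ℝ) (x⁻) := by
    rw [← map_sub, posPart_sub_negPart]
  show |(f : X →ₗ[ℝ] ℝ) x| ≤ _
  rw [key]
  have a1 : |(f : X →ₗ[ℝ] ℝ) (x⁺)| ≤ (w : X →ₗ[ℝ] ℝ) (x⁺) := abs_le.mpr ⟨c1, e2⟩
  have a2 : |(f : X →ₗ[ℝ] ℝ) (x⁻)| ≤ (w : X →ₗ[ℝ] ℝ) (x⁻) := abs_le.mpr ⟨c3, e4⟩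
  have := abs_sub ((f : X →ₗ[ℝ] ℝ) (x⁺)) ((f : X →ₗ[ℝ] ℝ) (x⁻))
  linarith

/-- The canonical embedding of `X` into the order dual of `Y ⊆ X~`. -/
def hatEl (Y : Submodule ℝ (X →ₗ[ℝ] ℝ)) (x : X) : obDual Y :=
  ⟨hatFun X Y x, hatFun_mem X Y x⟩

/-- `X~` separates the points of `X`. -/
def SepPoints : Prop := ∀ x : X, x ≠ 0 → ∃ f : obDual X, (f : X →ₗ[ℝ] ℝ) x ≠ 0

/-- The canonical image of `X` in `X~~` is a regular sublattice:
`x_α ↓ 0` in `X` implies `x̂_α ↓ 0` in `X~~`. -/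
def HatRegular : Prop :=
  ∀ D : Set X, D.Nonempty → DirectedOn (· ≥ ·) D → IsGLB D 0 →
    @IsGLB _ (instSubPre (obDual X) (obDual (obDual X))).toLE (hatEl X (obDual X) '' D) (0 : obDual ↥(obDual X))

variable {X} in
/-- The net `x̂_α` is eventually order bounded in `X~~`. -/
def HatEvOB {ι : Type*} [Preorder ι] (x : ι → X) : Prop :=
  ∃ (b t : obDual ↥(obDual X)) (α₀ : ι), ∀ α, α₀ ≤ α →
    @LE.le _ (instSubPre (obDual X) (obDual (obDual X))).toLE b (hatEl X (obDual X) (x α)) ∧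
      @LE.le _ (instSubPre (obDual X) (obDual (obDual X))).toLE (hatEl X (obDual X) (x α)) t

variable {X} in
/-- Bidual bounded uo-convergence. -/
def bbuoConvTo {ι : Type*} [Preorder ι] (x : ι → X) (l : X) : Prop :=
  uoConvTo x l ∧ HatEvOB x

/-- `X` has the `b`-property: every subset of `X` whose canonical image is
order bounded in `X~~` is order bounded in `X`. -/
def HasBProp : Prop :=
  ∀ A : Set X,
    (∃ b t : obDual ↥(obDual X), ∀ a ∈ A,
        @LE.le _ (instSubPre (obDual X) (obDual (obDual X))).toLE b (hatEl X (obDual X) a) ∧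
          @LE.le _ (instSubPre (obDual X) (obDual (obDual X))).toLE (hatEl X (obDual X) a) t) →
    ∃ b t : X, ∀ a ∈ A, b ≤ a ∧ a ≤ t

/-- The Archimedean property for a lattice-ordered group. -/
def IsArch : Prop := ∀ x y : X, 0 ≤ x → (∀ n : ℕ, n • x ≤ y) → x = 0

end VL

section OrderConvergence

variable {E : Type*} [Lattice E] [AddCommGroup E] [AddLeftMono E] [Module ℝ E]
  {ι : Type*} [Preorder ι] {x y : ι → E}

theorem oConvTo_zero_iff :
    OConvTo x 0 ↔ ∃ D : Set E, D.Nonempty ∧ DirectedOn (· ≥ ·) D ∧ IsGLB D 0 ∧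
      ∀ d ∈ D, ∃ α₀ : ι, ∀ α, α₀ ≤ α → |x α| ≤ d := by
  simp only [OConvTo, zero_sub, zero_add, abs_le', neg_le, and_comm]

theorem OConvTo.exists_abs_le (hx : OConvTo x 0) : ∃ (w : E) (α₀ : ι), ∀ α, α₀ ≤ α → |x α| ≤ w :=
  let ⟨_, ⟨d, hd⟩, _, _, hconv⟩ := oConvTo_zero_iff.1 hx
  ⟨d, hconv d hd⟩

theorem OConvTo.of_eventually_abs_le [IsDirected ι (· ≤ ·)] (hx : OConvTo x 0)
    (hyx : ∀ᶠ α in atTop, |y α| ≤ |x α|) : OConvTo y 0 := by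
  obtain ⟨D, hne, hdir, hglb, hconv⟩ := oConvTo_zero_iff.1 hx
  refine oConvTo_zero_iff.2 ⟨D, hne, hdir, hglb, fun d hd => ?_⟩
  obtain ⟨α₁, hα₁⟩ := hconv d hd
  have : Nonempty ι := ⟨α₁⟩
  obtain ⟨α₂, hα₂⟩ := eventually_atTop.1 (hyx.and (eventually_ge_atTop α₁))
  exact ⟨α₂, fun α hα => (hα₂ α hα).1.trans (hα₁ α (hα₂ α hα).2)⟩

end OrderConvergence

theorem statement3_general {X : Type u} [Lattice X] [AddCommGroup X]
    [CovariantClass X X (· + ·) (· ≤ ·)] [Module ℝ X] [PosSMulMono ℝ X]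
    {ι : Type v} [Preorder ι] [IsDirected ι (· ≤ ·)] (x : ι → X) :
    OConvTo x 0 ↔
      uoConvTo x 0 ∧ ∃ (w : X) (α₀ : ι), ∀ α, α₀ ≤ α → |x α| ≤ w := by
  refine ⟨fun hx => ⟨fun u hu => hx.of_eventually_abs_le (.of_forall fun α => ?_),
    hx.exists_abs_le⟩, ?_⟩
  · rw [abs_of_nonneg (le_inf (abs_nonneg _) hu), sub_zero]
    exact inf_le_left
  rintro ⟨huo, w, α₀, hw⟩
  have hw_nonneg : 0 ≤ w := (abs_nonneg _).trans (hw α₀ le_rfl)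
  -- beyond α₀, truncating |x α| at w changes nothing
  refine (huo w hw_nonneg).of_eventually_abs_le ((eventually_ge_atTop α₀).mono fun α hα => ?_)
  rw [sub_zero, inf_eq_left.2 (hw α hα), abs_abs]

/-- A net order converges to `0` iff it is uo-convergent to `0` and eventually
order bounded. -/
theorem statement3 {X : Type u} [Lattice X] [AddCommGroup X]
    [CovariantClass X X (· + ·) (· ≤ ·)] [Module ℝ X] [PosSMulMono ℝ X]
    (harch : IsArch X)
    {ι : Type v} [Preorder ι] [Nonempty ι] [IsDirected ι (· ≤ ·)] (x : ι → X) :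
    OConvTo x 0 ↔
      uoConvTo x 0 ∧ ∃ (w : X) (α₀ : ι), ∀ α, α₀ ≤ α → |x α| ≤ w :=
  statement3_general x
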